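/- If λ₁ ≥ λ₂ > 0, then P₍>₎(λ₁,λ₂) ≥ P₍<₎(λ₁,λ₂): of two independent Poisson counts, the one with the larger rate is at least as likely to strictly exceed the other as to fall strictly below it. -/

import Mathlib

/-- The Poisson probability mass function with rate `l`. -/
noncomputable def poissonPMF (l : ℝ) (i : ℕ) : ℝ :=
  Real.exp (-l) * l ^ i / (Nat.factorial i)

/-- Probability that the first of two independent Poisson counts (rates `l`, `m`)
strictly exceeds the second. -/
noncomputable def Pgt (l m : ℝ) : ℝ :=
  ∑' p : ℕ × ℕ, if p.2 < p.1 then poissonPMF l p.1 * poissonPMF m p.2 else 0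

/-- Probability that the first of two independent Poisson counts (rates `l`, `m`)
is strictly less than the second. -/
noncomputable def Plt (l m : ℝ) : ℝ :=
  ∑' p : ℕ × ℕ, if p.1 < p.2 then poissonPMF l p.1 * poissonPMF m p.2 else 0

lemma poissonPMF_nonneg {l : ℝ} (hl : 0 ≤ l) (i : ℕ) : 0 ≤ poissonPMF l i := by
  unfold poissonPMF
  positivity

lemma summable_poissonPMF (l : ℝ) : Summable (poissonPMF l) := by
  have : Summable (fun i : ℕ => Real.exp (-l) * (l ^ i / (Nat.factorial i))) :=
    (Real.summable_pow_div_factorial l).mul_left _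
  exact this.congr (fun i => by simp [poissonPMF, mul_div_assoc])

lemma summable_pair (l m : ℝ) :
    Summable (fun p : ℕ × ℕ => poissonPMF l p.1 * poissonPMF m p.2) := by
  apply summable_mul_of_summable_norm (f := poissonPMF l) (g := poissonPMF m)
  · exact (summable_poissonPMF l).abs
  · exact (summable_poissonPMF m).abs

lemma summable_if (l m : ℝ) (hl : 0 ≤ l) (hm : 0 ≤ m) (C : ℕ × ℕ → Prop)
    [DecidablePred C] :
    Summable (fun p : ℕ × ℕ => if C p then poissonPMF l p.1 * poissonPMF m p.2 else 0) := by
  refine Summable.of_nonneg_of_le ?_ ?_ (summable_pair l m)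
  · intro p
    split
    · exact mul_nonneg (poissonPMF_nonneg hl _) (poissonPMF_nonneg hm _)
    · exact le_rfl
  · intro p
    split
    · exact le_rfl
    · exact mul_nonneg (poissonPMF_nonneg hl _) (poissonPMF_nonneg hm _)

/-- Of two independent Poisson counts, the one with the larger rate is at least as
likely to strictly exceed the other as to fall strictly below it: if `l1 ≥ l2 > 0`
then `P₍>₎(l1,l2) ≥ P₍<₎(l1,l2)`. -/
theorem Plt_le_Pgt_of_rate_le (l1 l2 : ℝ) (hl2 : 0 < l2) (h : l2 ≤ l1) :
    Plt l1 l2 ≤ Pgt l1 l2 := by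
  have hl1 : 0 < l1 := lt_of_lt_of_le hl2 h
  -- rewrite Pgt via coordinate swap
  have hswap : Pgt l1 l2 =
      ∑' p : ℕ × ℕ, if p.1 < p.2 then poissonPMF l1 p.2 * poissonPMF l2 p.1 else 0 := by
    unfold Pgt
    rw [← (Equiv.prodComm ℕ ℕ).tsum_eq]
    rfl
  rw [hswap, Plt]
  apply Summable.tsum_le_tsum
  · intro p
    by_cases hp : p.1 < p.2
    · simp only [hp, if_true]
      -- key: l1^i * l2^j ≤ l1^j * l2^i for i < j
      obtain ⟨i, j⟩ := p
      simp only at hp ⊢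
      unfold poissonPMF
      rw [div_mul_div_comm, div_mul_div_comm, mul_comm ((Nat.factorial j : ℝ))]
      apply div_le_div_of_nonneg_right ?_ (by positivity : (0:ℝ) ≤ (Nat.factorial i : ℝ) * (Nat.factorial j : ℝ))
      · have key : l1 ^ i * l2 ^ j ≤ l1 ^ j * l2 ^ i := by
          obtain ⟨k, rfl⟩ : ∃ k, j = i + k + 1 := ⟨j - i - 1, by omega⟩
          have hk : l2 ^ (k + 1) ≤ l1 ^ (k + 1) := pow_le_pow_left₀ hl2.le h _
          calc l1 ^ i * l2 ^ (i + k + 1) = (l1 ^ i * l2 ^ i) * l2 ^ (k+1) := by ring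
            _ ≤ (l1 ^ i * l2 ^ i) * l1 ^ (k+1) := by
                apply mul_le_mul_of_nonneg_left hk (by positivity)
            _ = l1 ^ (i + k + 1) * l2 ^ i := by ring
        calc Real.exp (-l1) * l1 ^ i * (Real.exp (-l2) * l2 ^ j)
            = (Real.exp (-l1) * Real.exp (-l2)) * (l1 ^ i * l2 ^ j) := by ring
          _ ≤ (Real.exp (-l1) * Real.exp (-l2)) * (l1 ^ j * l2 ^ i) := by
              apply mul_le_mul_of_nonneg_left key (by positivity)
          _ = Real.exp (-l1) * l1 ^ j * (Real.exp (-l2) * l2 ^ i) := by ring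
    · simp [hp]
  · exact summable_if l1 l2 hl1.le hl2.le _
  · have := summable_if l1 l2 hl1.le hl2.le (fun p : ℕ × ℕ => p.2 < p.1)
    have h2 := this.comp_injective (Equiv.prodComm ℕ ℕ).injective
    exact h2
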